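/- For every p ≥ 1 and all θ₁, θ₂ ∈ ℝ^p: ‖softmax(θ₁) − softmax(θ₂)‖₁ ≤ 2‖θ₁ − θ₂‖_∞. In particular, the Jacobian J(θ) = diag(softmax(θ)) − softmax(θ)·softmax(θ)^⊤ of the softmax map satisfies ‖J(θ)‖_{1,1} ≤ 2 for all θ ∈ ℝ^p. -/

import Mathlib

open scoped BigOperators

noncomputable section

/-- ℓ¹ norm of a vector in ℝ^p. -/
def norm1 {p : ℕ} (v : Fin p → ℝ) : ℝ := ∑ i, |v i|

/-- ℓ^∞ norm of a vector in ℝ^p. -/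
def normInf {p : ℕ} (v : Fin p → ℝ) : ℝ := ⨆ i, |v i|

/-- The softmax map on ℝ^p. -/
def softmax {p : ℕ} (z : Fin p → ℝ) : Fin p → ℝ :=
  fun t => Real.exp (z t) / ∑ u, Real.exp (z u)

lemma sum_exp_pos' {p : ℕ} (hp : 1 ≤ p) (z : Fin p → ℝ) :
    0 < ∑ u, Real.exp (z u) := by
  have : Nonempty (Fin p) := ⟨⟨0, hp⟩⟩
  exact Finset.sum_pos (fun i _ => Real.exp_pos _) Finset.univ_nonempty

lemma softmax_nonneg' {p : ℕ} (hp : 1 ≤ p) (z : Fin p → ℝ) (i : Fin p) :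
    0 ≤ softmax z i :=
  div_nonneg (Real.exp_pos _).le (sum_exp_pos' hp z).le

lemma softmax_sum_one' {p : ℕ} (hp : 1 ≤ p) (z : Fin p → ℝ) :
    ∑ i, softmax z i = 1 := by
  unfold softmax
  rw [← Finset.sum_div, div_self (sum_exp_pos' hp z).ne']

lemma softmax_le_one' {p : ℕ} (hp : 1 ≤ p) (z : Fin p → ℝ) (i : Fin p) :
    softmax z i ≤ 1 := by
  have h := softmax_sum_one' hp z
  have : softmax z i ≤ ∑ j, softmax z j :=
    Finset.single_le_sum (fun j _ => softmax_nonneg' hp z j) (Finset.mem_univ i)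
  linarith

lemma hasDerivAt_N {p : ℕ} (θ u : Fin p → ℝ) (A : Finset (Fin p)) (t : ℝ) :
    HasDerivAt (fun s => ∑ i ∈ A, Real.exp (θ i + s * u i))
      (∑ i ∈ A, u i * Real.exp (θ i + t * u i)) t := by
  apply HasDerivAt.fun_sum
  intro i _
  have h1 : HasDerivAt (fun s : ℝ => θ i + s * u i) (u i) t := by
    simpa using ((hasDerivAt_id t).mul_const (u i)).const_add (θ i)
  simpa [mul_comm] using h1.exp

lemma key_lemma {p : ℕ} (hp : 1 ≤ p) (θ u : Fin p → ℝ) (d : ℝ)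
    (hd : ∀ i, |u i| ≤ d) (A : Finset (Fin p)) :
    (∑ i ∈ A, softmax (fun i => θ i + u i) i) - ∑ i ∈ A, softmax θ i ≤ d := by
  have hd0 : 0 ≤ d := le_trans (abs_nonneg _) (hd ⟨0, hp⟩)
  set g : ℝ → ℝ := fun t =>
    (∑ i ∈ A, Real.exp (θ i + t * u i)) / (∑ i, Real.exp (θ i + t * u i)) with hg
  set g' : ℝ → ℝ := fun t =>
    ((∑ i ∈ A, u i * Real.exp (θ i + t * u i)) * (∑ i, Real.exp (θ i + t * u i))
      - (∑ i ∈ A, Real.exp (θ i + t * u i)) * (∑ i, u i * Real.exp (θ i + t * u i)))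
      / (∑ i, Real.exp (θ i + t * u i)) ^ 2 with hg'
  have hD : ∀ t : ℝ, 0 < ∑ i, Real.exp (θ i + t * u i) := fun t =>
    sum_exp_pos' hp (fun i => θ i + t * u i)
  have hderiv : ∀ t : ℝ, HasDerivAt g (g' t) t := by
    intro t
    exact (hasDerivAt_N θ u A t).div (hasDerivAt_N θ u Finset.univ t) (hD t).ne'
  have hbound : ∀ t : ℝ, ‖g' t‖ ≤ d := by
    intro t
    set N := ∑ i ∈ A, Real.exp (θ i + t * u i) with hN
    set M := ∑ i ∈ Finset.univ \ A, Real.exp (θ i + t * u i) with hM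
    set N' := ∑ i ∈ A, u i * Real.exp (θ i + t * u i) with hN'
    set M' := ∑ i ∈ Finset.univ \ A, u i * Real.exp (θ i + t * u i) with hM'
    have hDsplit : (∑ i, Real.exp (θ i + t * u i)) = M + N :=
      (Finset.sum_sdiff (Finset.subset_univ A)).symm
    have hD'split : (∑ i, u i * Real.exp (θ i + t * u i)) = M' + N' :=
      (Finset.sum_sdiff (Finset.subset_univ A)).symm
    have hNnn : 0 ≤ N := Finset.sum_nonneg fun i _ => (Real.exp_pos _).le
    have hMnn : 0 ≤ M := Finset.sum_nonneg fun i _ => (Real.exp_pos _).le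
    have hN'le : |N'| ≤ d * N := by
      calc |N'| ≤ ∑ i ∈ A, |u i * Real.exp (θ i + t * u i)| := Finset.abs_sum_le_sum_abs _ _
        _ ≤ ∑ i ∈ A, d * Real.exp (θ i + t * u i) := by
            apply Finset.sum_le_sum
            intro i _
            rw [abs_mul, abs_of_pos (Real.exp_pos _)]
            exact mul_le_mul_of_nonneg_right (hd i) (Real.exp_pos _).le
        _ = d * N := by rw [Finset.mul_sum]
    have hM'le : |M'| ≤ d * M := by
      calc |M'| ≤ ∑ i ∈ Finset.univ \ A, |u i * Real.exp (θ i + t * u i)| :=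
            Finset.abs_sum_le_sum_abs _ _
        _ ≤ ∑ i ∈ Finset.univ \ A, d * Real.exp (θ i + t * u i) := by
            apply Finset.sum_le_sum
            intro i _
            rw [abs_mul, abs_of_pos (Real.exp_pos _)]
            exact mul_le_mul_of_nonneg_right (hd i) (Real.exp_pos _).le
        _ = d * M := by rw [Finset.mul_sum]
    have hDpos : 0 < M + N := by rw [← hDsplit]; exact hD t
    rw [Real.norm_eq_abs, hg']
    simp only [hDsplit, hD'split]
    rw [abs_div, abs_of_pos (pow_pos hDpos 2), div_le_iff₀ (pow_pos hDpos 2)]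
    rw [abs_le] at hN'le hM'le ⊢
    constructor <;> nlinarith [sq_nonneg (M - N), sq_nonneg (M + N), hN'le.1, hN'le.2,
      hM'le.1, hM'le.2, mul_nonneg hMnn hNnn]
  have hlip : ‖g 1 - g 0‖ ≤ d * ‖(1 : ℝ) - 0‖ := by
    apply Convex.norm_image_sub_le_of_norm_hasDerivWithin_le
      (fun x _ => (hderiv x).hasDerivWithinAt) (fun x _ => hbound x)
      convex_univ (Set.mem_univ 0) (Set.mem_univ 1)
  have h01 : g 1 - g 0 ≤ d := by
    have := (abs_le.mp (by simpa using hlip)).2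
    linarith [this]
  have hg1 : g 1 = ∑ i ∈ A, softmax (fun i => θ i + u i) i := by
    simp [hg, softmax, Finset.sum_div]
  have hg0 : g 0 = ∑ i ∈ A, softmax θ i := by
    simp [hg, softmax, Finset.sum_div]
  rw [← hg1, ← hg0]; exact h01

/-- softmax is 2-Lipschitz from (ℝ^p, ‖·‖_∞) to (ℝ^p, ‖·‖₁); moreover its
Jacobian `J(θ) = diag(softmax θ) − softmax θ · (softmax θ)ᵀ` has (1,1)-norm at most 2. -/
theorem softmax_lipschitz_and_jacobian {p : ℕ} (hp : 1 ≤ p) :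
    (∀ θ₁ θ₂ : Fin p → ℝ,
      norm1 (fun t => softmax θ₁ t - softmax θ₂ t) ≤ 2 * normInf (fun t => θ₁ t - θ₂ t)) ∧
    (∀ θ : Fin p → ℝ,
      ∑ i, ∑ j, |softmax θ i * ((if i = j then (1 : ℝ) else 0) - softmax θ j)| ≤ 2) := by
  constructor
  · intro θ₁ θ₂
    set d := normInf (fun t => θ₁ t - θ₂ t) with hdd
    have hd : ∀ i, |θ₁ i - θ₂ i| ≤ d := by
      intro i
      rw [hdd]
      unfold normInf
      exact le_ciSup (f := fun i => |θ₁ i - θ₂ i|)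
        (Set.Finite.bddAbove (Set.finite_range _)) i
    set A : Finset (Fin p) :=
      Finset.univ.filter (fun i => softmax θ₂ i ≤ softmax θ₁ i) with hA
    have hkey : (∑ i ∈ A, softmax θ₁ i) - ∑ i ∈ A, softmax θ₂ i ≤ d := by
      have := key_lemma hp θ₂ (fun i => θ₁ i - θ₂ i) d hd A
      have heq : (fun i => θ₂ i + (θ₁ i - θ₂ i)) = θ₁ := by funext i; ring
      rwa [heq] at this
    have hsplit1 : (∑ i ∈ A, softmax θ₁ i)
        + ∑ i ∈ Finset.univ.filter (fun i => ¬ softmax θ₂ i ≤ softmax θ₁ i), softmax θ₁ i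
        = 1 := by
      rw [hA, Finset.sum_filter_add_sum_filter_not]
      exact softmax_sum_one' hp θ₁
    have hsplit2 : (∑ i ∈ A, softmax θ₂ i)
        + ∑ i ∈ Finset.univ.filter (fun i => ¬ softmax θ₂ i ≤ softmax θ₁ i), softmax θ₂ i
        = 1 := by
      rw [hA, Finset.sum_filter_add_sum_filter_not]
      exact softmax_sum_one' hp θ₂
    have hnorm : norm1 (fun t => softmax θ₁ t - softmax θ₂ t)
        = (∑ i ∈ A, (softmax θ₁ i - softmax θ₂ i))
          + ∑ i ∈ Finset.univ.filter (fun i => ¬ softmax θ₂ i ≤ softmax θ₁ i),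
              (softmax θ₂ i - softmax θ₁ i) := by
      show (∑ i, |softmax θ₁ i - softmax θ₂ i|) = _
      rw [← Finset.sum_filter_add_sum_filter_not Finset.univ
        (fun i => softmax θ₂ i ≤ softmax θ₁ i)]
      congr 1
      · apply Finset.sum_congr rfl
        intro i hi
        rw [Finset.mem_filter] at hi
        exact abs_of_nonneg (by linarith [hi.2])
      · apply Finset.sum_congr rfl
        intro i hi
        rw [Finset.mem_filter] at hi
        rw [abs_sub_comm]
        exact abs_of_nonneg (by push_neg at hi; linarith [hi.2])
    rw [hnorm, Finset.sum_sub_distrib, Finset.sum_sub_distrib]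
    linarith
  · intro θ
    have hnn := softmax_nonneg' hp θ
    have hle1 := softmax_le_one' hp θ
    have hsum := softmax_sum_one' hp θ
    have hinner : ∀ i : Fin p,
        (∑ j, |softmax θ i * ((if i = j then (1 : ℝ) else 0) - softmax θ j)|)
          = softmax θ i * (2 * (1 - softmax θ i)) := by
      intro i
      have : ∀ j, |softmax θ i * ((if i = j then (1 : ℝ) else 0) - softmax θ j)|
          = softmax θ i * (if i = j then 1 - softmax θ j else softmax θ j) := by
        intro j
        rw [abs_mul, abs_of_nonneg (hnn i)]
        congr 1
        by_cases h : i = j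
        · rw [if_pos h, if_pos h, abs_of_nonneg (by linarith [hle1 j])]
        · rw [if_neg h, if_neg h, zero_sub, abs_neg, abs_of_nonneg (hnn j)]
      simp only [this, ← Finset.mul_sum]
      congr 1
      have hsplit : ∀ j : Fin p, (if i = j then 1 - softmax θ j else softmax θ j)
          = (if i = j then 1 - 2 * softmax θ j else 0) + softmax θ j := by
        intro j
        by_cases h : i = j
        · rw [if_pos h, if_pos h]; ring
        · rw [if_neg h, if_neg h]; ring
      simp only [hsplit]
      rw [Finset.sum_add_distrib, Finset.sum_ite_eq Finset.univ i
        (fun j => 1 - 2 * softmax θ j), if_pos (Finset.mem_univ i), hsum]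
      ring
    calc ∑ i, ∑ j, |softmax θ i * ((if i = j then (1 : ℝ) else 0) - softmax θ j)|
        = ∑ i, softmax θ i * (2 * (1 - softmax θ i)) :=
          Finset.sum_congr rfl fun i _ => hinner i
      _ ≤ ∑ i, softmax θ i * 2 := by
          apply Finset.sum_le_sum
          intro i _
          apply mul_le_mul_of_nonneg_left (by linarith [hnn i]) (hnn i)
      _ = 2 := by rw [← Finset.sum_mul, hsum, one_mul]
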